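/- arXiv:2306.12195 — 5 statements merged into one kernel-verified Lean document; each statement's English description precedes it below -/
import Mathlib

section
/- Let E be a real inner product space, let μ > 0 be a real number, and for v ∈ E set W(v) = √(1 + μ²‖v‖²) and N(v) = (μ·v/W(v), 1/W(v)) ∈ E × ℝ. Then for all v, w ∈ E one has ⟪v/W(v) − w/W(w), v − w⟫ = (1/(2μ²))·(W(v) + W(w))·‖N(v) − N(w)‖², where E × ℝ carries the product inner product. -/
/-!
`N v` is a unit vector, so `‖N v - N w‖² = 2 - 2⟪N v, N w⟫` with
`⟪N v, N w⟫ = (1 + μ²⟪v, w⟫) / (W v · W w)`. Eliminating `‖v‖²` and `‖w‖²` through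
`μ²‖v‖² = W v² - 1`, both sides become the same rational function of `W v`, `W w` and `⟪v, w⟫`.
-/

open scoped RealInnerProductSpace

section

variable {E : Type*} [NormedAddCommGroup E] [InnerProductSpace ℝ E]

lemma inner_toLp_smul_div (μ a b : ℝ) (v w : E) :
    ⟪WithLp.toLp 2 ((μ / a) • v, 1 / a), WithLp.toLp 2 ((μ / b) • w, 1 / b)⟫
      = (1 + μ ^ 2 * ⟪v, w⟫) / (a * b) := by
  rw [WithLp.prod_inner_apply, real_inner_smul_left, real_inner_smul_right]
  simp only [RCLike.inner_apply, conj_trivial]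
  field_simp
  ring

lemma norm_sq_toLp_smul_div {μ a : ℝ} {v : E} (ha : a ^ 2 = 1 + μ ^ 2 * ‖v‖ ^ 2) :
    ‖WithLp.toLp 2 ((μ / a) • v, 1 / a)‖ ^ 2 = 1 := by
  have ha₀ : a ≠ 0 := by
    rintro rfl
    nlinarith [sq_nonneg (μ * ‖v‖)]
  rw [← real_inner_self_eq_norm_sq, inner_toLp_smul_div, real_inner_self_eq_norm_sq, ← ha,
    ← sq, div_self (pow_ne_zero 2 ha₀)]

lemma inner_inv_smul_sub_inv_smul (a b : ℝ) (v w : E) :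
    ⟪a⁻¹ • v - b⁻¹ • w, v - w⟫ = a⁻¹ * ‖v‖ ^ 2 + b⁻¹ * ‖w‖ ^ 2 - (a⁻¹ + b⁻¹) * ⟪v, w⟫ := by
  rw [inner_sub_left, inner_sub_right, inner_sub_right, real_inner_smul_left,
    real_inner_smul_left, real_inner_smul_left, real_inner_smul_left,
    real_inner_self_eq_norm_sq, real_inner_self_eq_norm_sq, real_inner_comm w v]
  ring

end

/-- Pointwise content of the factorization Lemma 2.3: for `v, w` in a real inner
product space, with `W v = √(1 + μ²‖v‖²)` and `N v = (μ·v/W v, 1/W v) ∈ E × ℝ`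
(with the product inner product, i.e. the `L²` product), one has
`⟪v/W v − w/W w, v − w⟫ = (1/(2μ²))·(W v + W w)·‖N v − N w‖²`. -/
theorem stmt_0 {E : Type*} [NormedAddCommGroup E] [InnerProductSpace ℝ E]
    (μ : ℝ) (hμ : 0 < μ)
    (W : E → ℝ) (hW : ∀ v, W v = Real.sqrt (1 + μ ^ 2 * ‖v‖ ^ 2))
    (N : E → WithLp 2 (E × ℝ))
    (hN : ∀ v, N v = (WithLp.equiv 2 (E × ℝ)).symm ((μ / W v) • v, 1 / W v))
    (v w : E) :
    ⟪(W v)⁻¹ • v - (W w)⁻¹ • w, v - w⟫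
      = (1 / (2 * μ ^ 2)) * (W v + W w) * ‖N v - N w‖ ^ 2 := by
  have hW_pos : ∀ u, 0 < W u := fun u => by rw [hW]; positivity
  have hW_sq : ∀ u, W u ^ 2 = 1 + μ ^ 2 * ‖u‖ ^ 2 := fun u => by
    rw [hW, Real.sq_sqrt (by positivity)]
  simp only [WithLp.equiv_symm_apply] at hN
  have hN_norm : ∀ u, ‖N u‖ ^ 2 = 1 := fun u => by
    rw [hN]
    exact norm_sq_toLp_smul_div (hW_sq u)
  have hN_dist : ‖N v - N w‖ ^ 2 = 2 - 2 * ((1 + μ ^ 2 * ⟪v, w⟫) / (W v * W w)) := by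
    rw [norm_sub_sq_real, hN_norm, hN_norm, hN, hN, inner_toLp_smul_div]
    ring
  have hv : ‖v‖ ^ 2 = (W v ^ 2 - 1) / μ ^ 2 := by rw [hW_sq]; field_simp; ring
  have hw : ‖w‖ ^ 2 = (W w ^ 2 - 1) / μ ^ 2 := by rw [hW_sq]; field_simp; ring
  rw [inner_inv_smul_sub_inv_smul, hN_dist, hv, hw]
  have hWv_ne : W v ≠ 0 := (hW_pos v).ne'
  have hWw_ne : W w ≠ 0 := (hW_pos w).ne'
  field_simp
  ring
end

section
/- Let E be a real inner product space, let μ > 0 be a real number, and for v ∈ E set W(v) = √(1 + μ²‖v‖²). Then for all v, w ∈ E one has ⟪v/W(v) − w/W(w), v − w⟫ ≥ 0, and equality holds if and only if v = w. -/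
/-!
By Cauchy–Schwarz, `⟪v/W v − w/W w, v − w⟫ ≥ (‖v‖ − ‖w‖)(φ ‖v‖ − φ ‖w‖)` with
`φ s = s / √(1 + μ²s²)`, which is strictly increasing on `[0, ∞)`; so the pairing is
nonnegative, and it can vanish only if `‖v‖ = ‖w‖`. Then `W v = W w` and the pairing is
`‖v − w‖² / W v`.
-/

open scoped RealInnerProductSpace

open Set

lemma StrictMonoOn.sub_mul_sub_nonneg_and_eq_zero_iff {s : Set ℝ} {f : ℝ → ℝ}
    (hf : StrictMonoOn f s) {x y : ℝ} (hx : x ∈ s) (hy : y ∈ s) :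
    0 ≤ (x - y) * (f x - f y) ∧ ((x - y) * (f x - f y) = 0 ↔ x = y) := by
  rcases lt_trichotomy x y with hxy | rfl | hxy
  · have hpos : 0 < (x - y) * (f x - f y) :=
      mul_pos_of_neg_of_neg (sub_neg.2 hxy) (sub_neg.2 (hf hx hy hxy))
    exact ⟨hpos.le, iff_of_false hpos.ne' hxy.ne⟩
  · simp
  · have hpos : 0 < (x - y) * (f x - f y) :=
      mul_pos (sub_pos.2 hxy) (sub_pos.2 (hf hy hx hxy))
    exact ⟨hpos.le, iff_of_false hpos.ne' hxy.ne'⟩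

lemma strictMonoOn_div_sqrt_one_add_mul_sq {c : ℝ} (hc : 0 ≤ c) :
    StrictMonoOn (fun s : ℝ => s / √(1 + c * s ^ 2)) (Ici 0) := by
  intro s hs t ht hst
  simp only [mem_Ici] at hs ht
  rw [div_lt_div_iff₀ (by positivity) (by positivity)]
  calc s * √(1 + c * t ^ 2) = √(s ^ 2 * (1 + c * t ^ 2)) := by
        rw [Real.sqrt_mul (sq_nonneg s), Real.sqrt_sq hs]
    _ < √(t ^ 2 * (1 + c * s ^ 2)) := by
        apply Real.sqrt_lt_sqrt (by positivity)
        nlinarith [pow_lt_pow_left₀ hst hs two_ne_zero]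
    _ = t * √(1 + c * s ^ 2) := by
        rw [Real.sqrt_mul (sq_nonneg t), Real.sqrt_sq ht]

section InnerProductSpace

variable {E : Type*} [NormedAddCommGroup E] [InnerProductSpace ℝ E]

lemma sub_mul_sub_le_inner_smul_sub_smul {α β : ℝ} (hα : 0 ≤ α) (hβ : 0 ≤ β) (v w : E) :
    (‖v‖ - ‖w‖) * (α * ‖v‖ - β * ‖w‖) ≤ ⟪α • v - β • w, v - w⟫ := by
  have hexpand : ⟪α • v - β • w, v - w⟫ = α * ‖v‖ ^ 2 + β * ‖w‖ ^ 2 - (α + β) * ⟪v, w⟫ := by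
    simp only [inner_sub_left, inner_sub_right, real_inner_smul_left,
      real_inner_self_eq_norm_sq, real_inner_comm w v]
    ring
  rw [hexpand]
  nlinarith [mul_le_mul_of_nonneg_left (real_inner_le_norm v w) (add_nonneg hα hβ)]

lemma inner_smul_sub_smul_self (α : ℝ) (v w : E) :
    ⟪α • v - α • w, v - w⟫ = α * ‖v - w‖ ^ 2 := by
  rw [← smul_sub, real_inner_smul_left, real_inner_self_eq_norm_sq]

end InnerProductSpace

theorem stmt_1_general {E : Type*} [NormedAddCommGroup E] [InnerProductSpace ℝ E]
    (μ : ℝ)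
    (W : E → ℝ) (hW : ∀ v, W v = Real.sqrt (1 + μ ^ 2 * ‖v‖ ^ 2))
    (v w : E) :
    0 ≤ ⟪(W v)⁻¹ • v - (W w)⁻¹ • w, v - w⟫ ∧
      (⟪(W v)⁻¹ • v - (W w)⁻¹ • w, v - w⟫ = 0 ↔ v = w) := by
  have hW_pos (u : E) : 0 < W u := by rw [hW]; positivity
  have hprofile (u : E) : (W u)⁻¹ * ‖u‖ = ‖u‖ / √(1 + μ ^ 2 * ‖u‖ ^ 2) := by
    rw [hW, inv_mul_eq_div]
  obtain ⟨hradial_nonneg, hradial_eq_zero⟩ :=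
    (strictMonoOn_div_sqrt_one_add_mul_sq (sq_nonneg μ)).sub_mul_sub_nonneg_and_eq_zero_iff
      (mem_Ici.2 (norm_nonneg v)) (mem_Ici.2 (norm_nonneg w))
  have hlower := sub_mul_sub_le_inner_smul_sub_smul
    (inv_nonneg.2 (hW_pos v).le) (inv_nonneg.2 (hW_pos w).le) v w
  rw [hprofile, hprofile] at hlower
  refine ⟨hradial_nonneg.trans hlower, fun hzero => ?_, fun hvw => by simp [hvw]⟩
  have hnorm : ‖v‖ = ‖w‖ := hradial_eq_zero.1 (le_antisymm (hzero ▸ hlower) hradial_nonneg)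
  have hWvw : W v = W w := by rw [hW, hW, hnorm]
  rw [hWvw, inner_smul_sub_smul_self] at hzero
  simpa [sub_eq_zero, (hW_pos w).ne'] using hzero

/-- Monotonicity in the factorization Lemma 2.3: with `W v = √(1 + μ²‖v‖²)`,
`⟪v/W v − w/W w, v − w⟫ ≥ 0`, with equality if and only if `v = w`. -/
theorem stmt_1 {E : Type*} [NormedAddCommGroup E] [InnerProductSpace ℝ E]
    (μ : ℝ) (hμ : 0 < μ)
    (W : E → ℝ) (hW : ∀ v, W v = Real.sqrt (1 + μ ^ 2 * ‖v‖ ^ 2))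
    (v w : E) :
    0 ≤ ⟪(W v)⁻¹ • v - (W w)⁻¹ • w, v - w⟫ ∧
      (⟪(W v)⁻¹ • v - (W w)⁻¹ • w, v - w⟫ = 0 ↔ v = w) :=
  stmt_1_general μ W hW v w
end

section
/- Let E be a real inner product space, let μ > 0 be a real number, and for v ∈ E set W(v) = √(1 + μ²‖v‖²). Then for all v, w ∈ E one has ⟪v/W(v) − w/W(w), v − w⟫ = μ⁻²·(W(v) + W(w))·(1 − μ²⟪v,w⟫/(W(v)W(w)) − 1/(W(v)W(w))). -/
open scoped RealInnerProductSpace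

/-
Expanding the inner product gives `‖v‖²/W v + ‖w‖²/W w − (1/W v + 1/W w)⟪v,w⟫`. Since
`μ²‖v‖² = W v² − 1`, the first two terms equal `μ⁻²(W v − 1/W v + W w − 1/W w)
= μ⁻²(W v + W w)(1 − 1/(W v W w))`, and the last one is `μ⁻²(W v + W w)·μ²⟪v,w⟫/(W v W w)`.
-/

theorem real_inner_inv_smul_sub_inv_smul_sub {E : Type*} [NormedAddCommGroup E]
    [InnerProductSpace ℝ E] (a b : ℝ) (v w : E) :
    ⟪a⁻¹ • v - b⁻¹ • w, v - w⟫ = ‖v‖ ^ 2 / a + ‖w‖ ^ 2 / b - (a⁻¹ + b⁻¹) * ⟪v, w⟫ := by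
  simp only [inner_sub_left, inner_sub_right, real_inner_smul_left,
    real_inner_self_eq_norm_sq, real_inner_comm w v]
  ring

theorem div_add_div_sub_mul_eq_of_sq_eq {μ a b x y p : ℝ} (hμ : μ ≠ 0) (ha : a ≠ 0)
    (hb : b ≠ 0) (hx : a ^ 2 = 1 + μ ^ 2 * x) (hy : b ^ 2 = 1 + μ ^ 2 * y) :
    x / a + y / b - (a⁻¹ + b⁻¹) * p
      = (μ ^ 2)⁻¹ * (a + b) * (1 - μ ^ 2 * p / (a * b) - 1 / (a * b)) := by
  have hx' : x = (a ^ 2 - 1) / μ ^ 2 := by field_simp; linarith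
  have hy' : y = (b ^ 2 - 1) / μ ^ 2 := by field_simp; linarith
  subst hx' hy'
  field_simp
  ring

/-- First intermediate identity (equation (3.1)) in the proof of the
factorization Lemma 2.3: with `W v = √(1 + μ²‖v‖²)`,
`⟪v/W v − w/W w, v − w⟫ = μ⁻²·(W v + W w)·(1 − μ²⟪v,w⟫/(W v·W w) − 1/(W v·W w))`. -/
theorem stmt_2 {E : Type*} [NormedAddCommGroup E] [InnerProductSpace ℝ E]
    (μ : ℝ) (hμ : 0 < μ)
    (W : E → ℝ) (hW : ∀ v, W v = Real.sqrt (1 + μ ^ 2 * ‖v‖ ^ 2))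
    (v w : E) :
    ⟪(W v)⁻¹ • v - (W w)⁻¹ • w, v - w⟫
      = (μ ^ 2)⁻¹ * (W v + W w) *
        (1 - μ ^ 2 * ⟪v, w⟫ / (W v * W w) - 1 / (W v * W w)) := by
  have hW_sq (u : E) : W u ^ 2 = 1 + μ ^ 2 * ‖u‖ ^ 2 := by
    rw [hW]; exact Real.sq_sqrt (by positivity)
  have hW_ne (u : E) : W u ≠ 0 := by
    rw [hW]; positivity
  rw [real_inner_inv_smul_sub_inv_smul_sub]
  exact div_add_div_sub_mul_eq_of_sq_eq hμ.ne' (hW_ne v) (hW_ne w) (hW_sq v) (hW_sq w)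
end

section
/- Let x₁, y₁, x₂, y₂ be real numbers with (x₁, y₁) ≠ (0, 0), let λ > 0 and μ > 0, and let λₓ, λᵧ, μₓ, μᵧ be real numbers. Set s = √(x₁² + y₁²) and, for ℓ > 0 and reals ℓ₁, ℓ₂, define κ(ℓ, ℓ₁, ℓ₂) = (x₁y₂ − x₂y₁)/(ℓ·s³) + (ℓ₁·y₁ − ℓ₂·x₁)/(ℓ²·s). Then κ(λ, λₓ, λᵧ) − (μᵧ·x₁ − μₓ·y₁)/(μ·λ·s) = μ · κ(λ·μ, λₓ·μ + λ·μₓ, λᵧ·μ + λ·μᵧ). -/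
-- Geodesic curvature, for the metric `ℓ² (dx² + dy²)`, of a curve with velocity `(x₁, y₁)`,
-- acceleration `(x₂, y₂)` and Euclidean speed `s`; `ℓ₁, ℓ₂` are the partial derivatives of `ℓ`.
def geodesicCurvature {K : Type*} [Field K] (x₁ y₁ x₂ y₂ s ℓ ℓ₁ ℓ₂ : K) : K :=
  (x₁ * y₂ - x₂ * y₁) / (ℓ * s ^ 3) + (ℓ₁ * y₁ - ℓ₂ * x₁) / (ℓ ^ 2 * s)

-- The last two arguments on the right are the partial derivatives of `ℓ μ` by the product rule.
theorem geodesicCurvature_sub_eq_mul_geodesicCurvature_mul {K : Type*} [Field K]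
    {x₁ y₁ x₂ y₂ s ℓ ℓ₁ ℓ₂ μ μ₁ μ₂ : K} (hℓ : ℓ ≠ 0) (hμ : μ ≠ 0) (hs : s ≠ 0) :
    geodesicCurvature x₁ y₁ x₂ y₂ s ℓ ℓ₁ ℓ₂ - (μ₂ * x₁ - μ₁ * y₁) / (μ * ℓ * s) =
      μ * geodesicCurvature x₁ y₁ x₂ y₂ s (ℓ * μ) (ℓ₁ * μ + ℓ * μ₁) (ℓ₂ * μ + ℓ * μ₂) := by
  unfold geodesicCurvature
  field_simp
  ring

theorem Real.sqrt_sq_add_sq_ne_zero {x y : ℝ} (h : (x, y) ≠ (0, 0)) : √(x ^ 2 + y ^ 2) ≠ 0 := by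
  rw [Real.sqrt_ne_zero']
  contrapose! h
  ext <;> dsimp <;> nlinarith [sq_nonneg x, sq_nonneg y]

/-- Algebraic identity underlying Proposition 2.4 (mean curvature of a vertical
cylinder): with `s = √(x₁² + y₁²)` and
`κ ℓ ℓ₁ ℓ₂ = (x₁y₂ − x₂y₁)/(ℓ·s³) + (ℓ₁·y₁ − ℓ₂·x₁)/(ℓ²·s)`, one has
`κ λ λₓ λᵧ − (μᵧx₁ − μₓy₁)/(μλs) = μ·κ (λμ) (λₓμ + λμₓ) (λᵧμ + λμᵧ)`. -/
theorem stmt_5 (x₁ y₁ x₂ y₂ : ℝ) (hxy : (x₁, y₁) ≠ ((0 : ℝ), (0 : ℝ)))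
    (lam mu : ℝ) (hlam : 0 < lam) (hmu : 0 < mu)
    (lamx lamy mux muy : ℝ)
    (s : ℝ) (hs : s = Real.sqrt (x₁ ^ 2 + y₁ ^ 2))
    (κ : ℝ → ℝ → ℝ → ℝ)
    (hκ : ∀ ℓ ℓ₁ ℓ₂ : ℝ,
      κ ℓ ℓ₁ ℓ₂ = (x₁ * y₂ - x₂ * y₁) / (ℓ * s ^ 3) + (ℓ₁ * y₁ - ℓ₂ * x₁) / (ℓ ^ 2 * s)) :
    κ lam lamx lamy - (muy * x₁ - mux * y₁) / (mu * lam * s)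
      = mu * κ (lam * mu) (lamx * mu + lam * mux) (lamy * mu + lam * muy) := by
  obtain rfl : κ = geodesicCurvature x₁ y₁ x₂ y₂ s := funext₃ hκ
  exact geodesicCurvature_sub_eq_mul_geodesicCurvature_mul hlam.ne' hmu.ne'
    (hs ▸ Real.sqrt_sq_add_sq_ne_zero hxy)
end

section
/- Let λ, μ, a, b : ℝ² → ℝ with λ > 0 and μ > 0 everywhere, and for p = (x, y, t) ∈ ℝ³ define the bilinear form g_p(u, v) = λ(x,y)²·(u₁v₁ + u₂v₂) + μ(x,y)²·(u₃ − λ(x,y)(a(x,y)u₁ + b(x,y)u₂))·(v₃ − λ(x,y)(a(x,y)v₁ + b(x,y)v₂)) on ℝ³. Assume λ, a, b are differentiable and define E₁(x,y,t) = (1/λ(x,y), 0, a(x,y)), E₂(x,y,t) = (0, 1/λ(x,y), b(x,y)), E₃(x,y,t) = (0, 0, 1/μ(x,y)). Then at every point p = (x, y, t), (1/μ(x,y))·g_p([E₁, E₂](p), E₃(p)) = ((∂(λb)/∂x)(x,y) − (∂(λa)/∂y)(x,y))/λ(x,y)², where [E₁, E₂](p) = (DE₂)_p(E₁(p)) − (DE₁)_p(E₂(p)).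 -/
/-!
The frame fields do not depend on `t`, so their derivatives are derivatives of maps on the base,
and the bracket is `[E₁, E₂] = (λ_y / λ³, -λ_x / λ³, (b_x - a_y) / λ)`. Pairing with `E₃` picks
out `μ` times the vertical part `u₃ - λ (a u₁ + b u₂)` of `u = [E₁, E₂]`, which by the product rule
is `((λ b)_x - (λ a)_y) / λ²`.
-/

open ContinuousLinearMap

section
variable {𝕜 : Type*} [NontriviallyNormedField 𝕜]
  {E F G H : Type*} [NormedAddCommGroup E] [NormedSpace 𝕜 E] [NormedAddCommGroup F]
  [NormedSpace 𝕜 F] [NormedAddCommGroup G] [NormedSpace 𝕜 G] [NormedAddCommGroup H]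
  [NormedSpace 𝕜 H]

theorem fderiv_comp_fst_fst_snd_apply {V : E × F → H} {x : E} {y : F} (t : G)
    (hV : DifferentiableAt 𝕜 V (x, y)) (v : E × F × G) :
    fderiv 𝕜 (fun p : E × F × G => V (p.1, p.2.1)) (x, y, t) v =
      fderiv 𝕜 V (x, y) (v.1, v.2.1) := by
  have hπ : HasFDerivAt (fun p : E × F × G => (p.1, p.2.1))
      ((ContinuousLinearMap.id 𝕜 E).prodMap (fst 𝕜 F G)) (x, y, t) :=
    ((ContinuousLinearMap.id 𝕜 E).prodMap (fst 𝕜 F G)).hasFDerivAt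
  exact congrArg (fun L => L v) (hV.hasFDerivAt.comp (x, y, t) hπ).fderiv

theorem fderiv_prodMk_prodMk_apply {f : E → F} {g : E → G} {h : E → H} {x : E}
    (hf : DifferentiableAt 𝕜 f x) (hg : DifferentiableAt 𝕜 g x) (hh : DifferentiableAt 𝕜 h x)
    (v : E) :
    fderiv 𝕜 (fun x => (f x, g x, h x)) x v = (fderiv 𝕜 f x v, fderiv 𝕜 g x v, fderiv 𝕜 h x v) := by
  rw [hf.fderiv_prodMk (hg.prodMk hh), hg.fderiv_prodMk hh]
  rfl

theorem fderiv_one_div_apply {f : E → 𝕜} {x : E} (hf : DifferentiableAt 𝕜 f x) (hx : f x ≠ 0)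
    (v : E) : fderiv 𝕜 (fun y => 1 / f y) x v = -fderiv 𝕜 f x v / f x ^ 2 := by
  have h := (hasFDerivAt_inv hx).comp x hf.hasFDerivAt
  simp only [one_div]
  rw [show (fun y => (f y)⁻¹) = (fun t : 𝕜 => t⁻¹) ∘ f from rfl, h.fderiv]
  simp [div_eq_mul_inv, mul_comm]

theorem ContinuousLinearMap.map_mk_zero (T : 𝕜 × 𝕜 →L[𝕜] F) (c : 𝕜) :
    T (c, 0) = c • T (1, 0) := by
  simpa using T.map_smul c (1, 0)

theorem ContinuousLinearMap.map_zero_mk (T : 𝕜 × 𝕜 →L[𝕜] F) (c : 𝕜) :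
    T (0, c) = c • T (0, 1) := by
  simpa using T.map_smul c (0, 1)

end

/-- Equation (2.3) in the local model of a Killing submersion: with the metric
`g_p(u, v) = λ²(u₁v₁ + u₂v₂) + μ²(u₃ − λ(au₁ + bu₂))(v₃ − λ(av₁ + bv₂))`
and the frame `E₁ = (1/λ, 0, a)`, `E₂ = (0, 1/λ, b)`, `E₃ = (0, 0, 1/μ)`,
one has `(1/μ)·g_p([E₁,E₂](p), E₃(p)) = ((λb)ₓ − (λa)ᵧ)/λ²`, where
`[E₁,E₂](p) = (DE₂)_p(E₁(p)) − (DE₁)_p(E₂(p))`. -/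
theorem stmt_9 (lam mu a b : ℝ × ℝ → ℝ)
    (hlam_pos : ∀ q : ℝ × ℝ, 0 < lam q) (hmu_pos : ∀ q : ℝ × ℝ, 0 < mu q)
    (hlam : Differentiable ℝ lam) (ha : Differentiable ℝ a)
    (hb : Differentiable ℝ b)
    (g : ℝ × ℝ × ℝ → (ℝ × ℝ × ℝ) → (ℝ × ℝ × ℝ) → ℝ)
    (hg : ∀ (p u v : ℝ × ℝ × ℝ), g p u v =
      lam (p.1, p.2.1) ^ 2 * (u.1 * v.1 + u.2.1 * v.2.1)
      + mu (p.1, p.2.1) ^ 2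
        * (u.2.2 - lam (p.1, p.2.1) * (a (p.1, p.2.1) * u.1 + b (p.1, p.2.1) * u.2.1))
        * (v.2.2 - lam (p.1, p.2.1) * (a (p.1, p.2.1) * v.1 + b (p.1, p.2.1) * v.2.1)))
    (E₁ E₂ E₃ : ℝ × ℝ × ℝ → ℝ × ℝ × ℝ)
    (hE₁ : ∀ p : ℝ × ℝ × ℝ, E₁ p = (1 / lam (p.1, p.2.1), 0, a (p.1, p.2.1)))
    (hE₂ : ∀ p : ℝ × ℝ × ℝ, E₂ p = (0, 1 / lam (p.1, p.2.1), b (p.1, p.2.1)))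
    (hE₃ : ∀ p : ℝ × ℝ × ℝ, E₃ p = (0, 0, 1 / mu (p.1, p.2.1)))
    (p : ℝ × ℝ × ℝ) :
    (1 / mu (p.1, p.2.1))
        * g p (fderiv ℝ E₂ p (E₁ p) - fderiv ℝ E₁ p (E₂ p)) (E₃ p)
      = (fderiv ℝ (fun q => lam q * b q) (p.1, p.2.1) (1, 0)
          - fderiv ℝ (fun q => lam q * a q) (p.1, p.2.1) (0, 1))
        / lam (p.1, p.2.1) ^ 2 := by
  obtain ⟨x, y, t⟩ := p
  dsimp only
  have hlam₀ : lam (x, y) ≠ 0 := (hlam_pos (x, y)).ne'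
  have hinv : DifferentiableAt ℝ (fun r => 1 / lam r) (x, y) := by
    fun_prop (disch := exact hlam₀)
  have bracket : fderiv ℝ E₂ (x, y, t) (E₁ (x, y, t)) - fderiv ℝ E₁ (x, y, t) (E₂ (x, y, t)) =
      (fderiv ℝ lam (x, y) (0, 1) / lam (x, y) ^ 3, -fderiv ℝ lam (x, y) (1, 0) / lam (x, y) ^ 3,
        (fderiv ℝ b (x, y) (1, 0) - fderiv ℝ a (x, y) (0, 1)) / lam (x, y)) := by
    rw [funext hE₁, funext hE₂,
      fderiv_comp_fst_fst_snd_apply (V := fun r => ((0 : ℝ), 1 / lam r, b r)) t (by fun_prop),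
      fderiv_comp_fst_fst_snd_apply (V := fun r => (1 / lam r, (0 : ℝ), a r)) t (by fun_prop),
      fderiv_prodMk_prodMk_apply (differentiableAt_const 0) hinv (hb _),
      fderiv_prodMk_prodMk_apply hinv (differentiableAt_const 0) (ha _),
      fderiv_one_div_apply (hlam _) hlam₀, fderiv_one_div_apply (hlam _) hlam₀]
    simp only [fderiv_const_apply, zero_apply, Prod.mk_sub_mk,
      map_mk_zero (fderiv ℝ _ (x, y)) (1 / lam (x, y)),
      map_zero_mk (fderiv ℝ _ (x, y)) (1 / lam (x, y))]
    ext <;> simp only [smul_eq_mul] <;> field_simp <;> ring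
  rw [hg, hE₃, bracket, fderiv_fun_mul (hlam _) (hb _), fderiv_fun_mul (hlam _) (ha _)]
  simp only [add_apply, smul_apply, smul_eq_mul]
  field_simp [(hmu_pos (x, y)).ne']
  ring
end
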